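/- Let (X,T) be a transitive topological dynamical system such that the strongly doubly regionally proximal relation RP²ₛ is the equality relation on X. Then the system (X,T) is distal and minimal. -/

import Mathlib

open Filter Topology

/-- The `n`-th iterate (`n : ℤ`) of a homeomorphism `T : X → X`. -/
def iterZ {X : Type*} [TopologicalSpace X] (T : X ≃ₜ X) (n : ℤ) : X → X :=
  fun x => (T.toEquiv ^ n) x

section Defs

variable {X : Type*} [TopologicalSpace X]

/-- The set of parallelograms `𝒫`: the closure in `X⁴` of
`{(x, Tᵐx, Tⁿx, Tᵐ⁺ⁿx) : x ∈ X, m, n ∈ ℤ}`. -/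
def Para (T : X ≃ₜ X) : Set (X × X × X × X) :=
  closure {q | ∃ (x : X) (m n : ℤ),
    q = (x, iterZ T m x, iterZ T n x, iterZ T (m + n) x)}

/-- The set of parallelepipeds `𝒬`: the closure in `X⁸ = X⁴ × X⁴` of
`{(x, Tᵐx, Tⁿx, Tᵐ⁺ⁿx, Tᵖx, Tᵐ⁺ᵖx, Tⁿ⁺ᵖx, Tᵐ⁺ⁿ⁺ᵖx) : x ∈ X, m, n, p ∈ ℤ}`. -/
def Pip (T : X ≃ₜ X) : Set ((X × X × X × X) × (X × X × X × X)) :=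
  closure {q | ∃ (x : X) (m n p : ℤ),
    q = ((x, iterZ T m x, iterZ T n x, iterZ T (m + n) x),
         (iterZ T p x, iterZ T (m + p) x, iterZ T (n + p) x, iterZ T (m + n + p) x))}

end Defs

section MetricDefs

variable {X : Type*} [MetricSpace X]

/-- `(X, T)` is transitive: some point has dense orbit `{Tⁿx : n ∈ ℤ}`. -/
def IsTransitive (T : X ≃ₜ X) : Prop :=
  ∃ x : X, Dense (Set.range fun n : ℤ => iterZ T n x)

/-- `(X, T)` is minimal: every point has dense orbit. -/
def IsMinimal (T : X ≃ₜ X) : Prop :=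
  ∀ x : X, Dense (Set.range fun n : ℤ => iterZ T n x)

/-- `(x, y)` is a proximal pair: `inf_{n ∈ ℤ} d(Tⁿx, Tⁿy) = 0`. -/
def ProximalPair (T : X ≃ₜ X) (x y : X) : Prop :=
  ⨅ n : ℤ, dist (iterZ T n x) (iterZ T n y) = 0

/-- `(X, T)` is distal: every pair of distinct points is distal,
i.e. `inf_{n ∈ ℤ} d(Tⁿx, Tⁿy) > 0`. -/
def IsDistal (T : X ≃ₜ X) : Prop :=
  ∀ x y : X, x ≠ y → 0 < ⨅ n : ℤ, dist (iterZ T n x) (iterZ T n y)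

/-- The regionally proximal relation `RP`. -/
def RP (T : X ≃ₜ X) (x y : X) : Prop :=
  ∀ ε > 0, ∃ x' y' : X, ∃ n : ℤ,
    dist x' x < ε ∧ dist y' y < ε ∧ dist (iterZ T n x') (iterZ T n y') < ε

/-- The doubly regionally proximal relation `RP²`. -/
def RP2 (T : X ≃ₜ X) (x y : X) : Prop :=
  ∀ ε > 0, ∃ x' y' : X, ∃ m n : ℤ,
    dist x' x < ε ∧ dist y' y < ε ∧
    dist (iterZ T m x') (iterZ T m y') < ε ∧
    dist (iterZ T n x') (iterZ T n y') < ε ∧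
    dist (iterZ T (m + n) x') (iterZ T (m + n) y') < ε

/-- The strongly doubly regionally proximal relation `RP²ₛ`. -/
def RP2S (T : X ≃ₜ X) (x y : X) : Prop :=
  ∀ ε > 0, ∃ x' y' : X, ∃ m n : ℤ,
    dist x' x < ε ∧ dist y' y < ε ∧
    dist (iterZ T m x') y < ε ∧ dist (iterZ T n x') y < ε ∧
    dist (iterZ T (m + n) x') y < ε ∧
    dist (iterZ T m y') y < ε ∧ dist (iterZ T n y') y < ε ∧
    dist (iterZ T (m + n) y') y < ε

end MetricDefs
section EllisProof

variable {X : Type*} [MetricSpace X] [CompactSpace X]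

lemma iterZ_add (T : X ≃ₜ X) (m n : ℤ) (x : X) :
    iterZ T (m + n) x = iterZ T m (iterZ T n x) := by
  simp [iterZ, zpow_add, Equiv.Perm.mul_apply]

lemma iterZ_add' (T : X ≃ₜ X) (m n : ℤ) (x : X) :
    iterZ T (m + n) x = iterZ T n (iterZ T m x) := by
  rw [add_comm]; exact iterZ_add T n m x

lemma continuous_iterZ (T : X ≃ₜ X) (n : ℤ) : Continuous (iterZ T n) := by
  induction n using Int.induction_on with
  | zero => rw [show iterZ T 0 = id from funext fun x => by simp [iterZ]]; exact continuous_id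
  | succ k ih =>
      have hk : iterZ T (k + 1) = iterZ T k ∘ iterZ T 1 := by
        funext x; exact iterZ_add T k 1 x
      have h1 : Continuous (iterZ T 1) := by
        have : iterZ T 1 = T := by funext x; simp [iterZ]
        rw [this]; exact T.continuous
      rw [hk]; exact ih.comp h1
  | pred k ih =>
      have hk : iterZ T (-(k:ℤ) - 1) = iterZ T (-k) ∘ iterZ T (-1) := by
        funext x; rw [sub_eq_add_neg]; exact iterZ_add T (-k) (-1) x
      have h1 : Continuous (iterZ T (-1)) := by
        have : iterZ T (-1) = T.symm := by
          funext x; simp [iterZ, zpow_neg, zpow_one]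
        rw [this]; exact T.symm.continuous
      rw [hk]; exact ih.comp h1

/-- The Ellis semigroup: closure of the `T`-powers in the product topology. -/
def Ell (T : X ≃ₜ X) : Set (X → X) := closure (Set.range fun n : ℤ => iterZ T n)

lemma iterZ_mem_Ell (T : X ≃ₜ X) (n : ℤ) : iterZ T n ∈ Ell T :=
  subset_closure ⟨n, rfl⟩

lemma isClosed_Ell (T : X ≃ₜ X) : IsClosed (Ell T) := isClosed_closure

lemma isCompact_Ell (T : X ≃ₜ X) : IsCompact (Ell T) := (isClosed_Ell T).isCompact

lemma comp_mem_Ell (T : X ≃ₜ X) {f g : X → X} (hf : f ∈ Ell T) (hg : g ∈ Ell T) :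
    f ∘ g ∈ Ell T := by
  have step1 : ∀ n : ℤ, ∀ g' ∈ Ell T, iterZ T n ∘ g' ∈ Ell T := by
    intro n g' hg'
    have hc : Continuous (fun h : X → X => iterZ T n ∘ h) :=
      continuous_pi fun x => (continuous_iterZ T n).comp (continuous_apply x)
    have himg : (fun h : X → X => iterZ T n ∘ h) ''
        (Set.range fun m : ℤ => iterZ T m) ⊆ Set.range fun m : ℤ => iterZ T m := by
      rintro - ⟨-, ⟨m, rfl⟩, rfl⟩
      exact ⟨n + m, funext fun x => iterZ_add T n m x⟩
    have h1 : (fun h : X → X => iterZ T n ∘ h) g' ∈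
        closure ((fun h : X → X => iterZ T n ∘ h) '' (Set.range fun m : ℤ => iterZ T m)) :=
      image_closure_subset_closure_image hc ⟨g', hg', rfl⟩
    exact closure_mono himg h1
  have hc : Continuous (fun h : X → X => h ∘ g) :=
    continuous_pi fun x => continuous_apply (g x)
  have himg : (fun h : X → X => h ∘ g) '' (Set.range fun m : ℤ => iterZ T m) ⊆ Ell T := by
    rintro - ⟨-, ⟨m, rfl⟩, rfl⟩
    exact step1 m g hg
  have h1 : (fun h : X → X => h ∘ g) f ∈
      closure ((fun h : X → X => h ∘ g) '' (Set.range fun m : ℤ => iterZ T m)) :=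
    image_closure_subset_closure_image hc ⟨f, hf, rfl⟩
  exact (isClosed_Ell T).closure_subset ((closure_mono himg) h1)

lemma Ell_comm (T : X ≃ₜ X) {f : X → X} (hf : f ∈ Ell T) (m : ℤ) (x : X) :
    f (iterZ T m x) = iterZ T m (f x) := by
  have hsub : Ell T ⊆ {g : X → X | g (iterZ T m x) = iterZ T m (g x)} := by
    apply closure_minimal
    · rintro - ⟨n, rfl⟩
      calc iterZ T n (iterZ T m x) = iterZ T (m + n) x := (iterZ_add' T m n x).symm
        _ = iterZ T m (iterZ T n x) := iterZ_add T m n x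
    · exact isClosed_eq (continuous_apply _) ((continuous_iterZ T m).comp (continuous_apply x))
  exact hsub hf

lemma Ell_approx (T : X ≃ₜ X) {f : X → X} (hf : f ∈ Ell T) (a b c d : X) {ε : ℝ}
    (hε : 0 < ε) : ∃ n : ℤ, dist (iterZ T n a) (f a) < ε ∧ dist (iterZ T n b) (f b) < ε ∧
      dist (iterZ T n c) (f c) < ε ∧ dist (iterZ T n d) (f d) < ε := by
  have hU : IsOpen {g : X → X | dist (g a) (f a) < ε ∧ dist (g b) (f b) < ε ∧
      dist (g c) (f c) < ε ∧ dist (g d) (f d) < ε} := by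
    have he : {g : X → X | dist (g a) (f a) < ε ∧ dist (g b) (f b) < ε ∧
        dist (g c) (f c) < ε ∧ dist (g d) (f d) < ε} =
        (fun g : X → X => g a) ⁻¹' Metric.ball (f a) ε ∩
        ((fun g : X → X => g b) ⁻¹' Metric.ball (f b) ε ∩
        ((fun g : X → X => g c) ⁻¹' Metric.ball (f c) ε ∩
         (fun g : X → X => g d) ⁻¹' Metric.ball (f d) ε)) := by
      ext g; simp [Metric.mem_ball, and_assoc]
    rw [he]
    exact (Metric.isOpen_ball.preimage (continuous_apply a)).inter
      ((Metric.isOpen_ball.preimage (continuous_apply b)).inter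
      ((Metric.isOpen_ball.preimage (continuous_apply c)).inter
       (Metric.isOpen_ball.preimage (continuous_apply d))))
  have hfU : f ∈ {g : X → X | dist (g a) (f a) < ε ∧ dist (g b) (f b) < ε ∧
      dist (g c) (f c) < ε ∧ dist (g d) (f d) < ε} := by simp [hε]
  obtain ⟨g, hgU, n, rfl⟩ := mem_closure_iff.mp hf _ hU hfU
  exact ⟨n, hgU.1, hgU.2.1, hgU.2.2.1, hgU.2.2.2⟩

lemma exists_idem_of_closed {S : Set (X → X)} (hne : S.Nonempty) (hcl : IsClosed S)
    (hmul : ∀ f ∈ S, ∀ g ∈ S, f ∘ g ∈ S) : ∃ f ∈ S, f ∘ f = f := by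
  haveI : Nonempty S := hne.to_subtype
  letI : Semigroup S :=
    { mul := fun f g => ⟨f.1 ∘ g.1, hmul _ f.2 _ g.2⟩
      mul_assoc := fun a b c => Subtype.ext rfl }
  haveI : CompactSpace S := isCompact_iff_compactSpace.mp hcl.isCompact
  have hcont : ∀ r : S, Continuous (· * r) := by
    intro r
    have h1 : Continuous fun g : X → X => g ∘ (r.1 : X → X) :=
      continuous_pi fun x => continuous_apply (r.1 x)
    exact (h1.comp continuous_subtype_val).subtype_mk _
  obtain ⟨m, hm⟩ := exists_idempotent_of_compact_t2_of_continuous_mul_left hcont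
  exact ⟨m.1, m.2, congrArg Subtype.val hm⟩

lemma rp2s_of_idem (T : X ≃ₜ X) {u : X → X} (hu : u ∈ Ell T) (hid : u ∘ u = u) (x : X) :
    RP2S T x (u x) := by
  set z := u x with hz
  have hzz : u z = z := congrFun hid x
  intro ε hε
  obtain ⟨m, hm1, hm2, -, -⟩ := Ell_approx T hu x z x z (half_pos hε)
  rw [← hz] at hm1
  rw [hzz] at hm2
  obtain ⟨n, hn1, hn2, hn3, hn4⟩ := Ell_approx T hu x z (iterZ T m x) (iterZ T m z) (half_pos hε)
  rw [← hz] at hn1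
  rw [hzz] at hn2
  have e2 : u (iterZ T m x) = iterZ T m z := by rw [Ell_comm T hu m x, ← hz]
  have e3 : u (iterZ T m z) = iterZ T m z := by rw [Ell_comm T hu m z, hzz]
  rw [e2] at hn3
  rw [e3] at hn4
  refine ⟨x, z, m, n, by simpa using hε, by simpa using hε, by linarith, by linarith, ?_,
    by linarith, by linarith, ?_⟩
  · calc dist (iterZ T (m + n) x) z
        ≤ dist (iterZ T n (iterZ T m x)) (iterZ T m z) + dist (iterZ T m z) z := by
          rw [iterZ_add' T m n x]; exact dist_triangle _ _ _
      _ < ε := by linarith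
  · calc dist (iterZ T (m + n) z) z
        ≤ dist (iterZ T n (iterZ T m z)) (iterZ T m z) + dist (iterZ T m z) z := by
          rw [iterZ_add' T m n z]; exact dist_triangle _ _ _
      _ < ε := by linarith

lemma eq_of_ell (T : X ≃ₜ X) (h : ∀ x y : X, RP2S T x y → x = y) {p : X → X}
    (hp : p ∈ Ell T) (x y : X) (hxy : p x = p y) : x = y := by
  have hne : (Ell T ∩ {q : X → X | q x = q y}).Nonempty := ⟨p, hp, hxy⟩
  have hcl : IsClosed (Ell T ∩ {q : X → X | q x = q y}) :=
    (isClosed_Ell T).inter (isClosed_eq (continuous_apply x) (continuous_apply y))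
  have hmul : ∀ f ∈ Ell T ∩ {q : X → X | q x = q y},
      ∀ g ∈ Ell T ∩ {q : X → X | q x = q y},
      f ∘ g ∈ Ell T ∩ {q : X → X | q x = q y} := by
    intro f hf g hg
    refine ⟨comp_mem_Ell T hf.1 hg.1, ?_⟩
    show f (g x) = f (g y)
    rw [hg.2]
  obtain ⟨u, hu, huu⟩ := exists_idem_of_closed hne hcl hmul
  have h1 : x = u x := h x (u x) (rp2s_of_idem T hu.1 huu x)
  have h2 : y = u y := h y (u y) (rp2s_of_idem T hu.1 huu y)
  rw [h1, h2, hu.2]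

lemma exists_ell_eq (T : X ≃ₜ X) (x y : X)
    (hp : ∀ ε : ℝ, 0 < ε → ∃ n : ℤ, dist (iterZ T n x) (iterZ T n y) < ε) :
    ∃ p ∈ Ell T, p x = p y := by
  set Z : ℕ → Set (X → X) :=
    fun k => Ell T ∩ {f : X → X | dist (f x) (f y) ≤ 1 / (k + 1)} with hZ
  have hmono : ∀ a b : ℕ, a ≤ b → Z b ⊆ Z a := by
    intro a b hab f hf
    refine ⟨hf.1, ?_⟩
    show dist (f x) (f y) ≤ 1 / (a + 1)
    refine le_trans hf.2 ?_
    apply one_div_le_one_div_of_le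
    · positivity
    · have : (a : ℝ) ≤ (b : ℝ) := Nat.cast_le.mpr hab
      linarith
  have hd : Directed (· ⊇ ·) Z := fun a b =>
    ⟨max a b, hmono a (max a b) (le_max_left a b), hmono b (max a b) (le_max_right a b)⟩
  have hn : ∀ k, (Z k).Nonempty := by
    intro k
    obtain ⟨n, hn⟩ := hp (1 / (k + 1)) (by positivity)
    exact ⟨iterZ T n, iterZ_mem_Ell T n, hn.le⟩
  have hcl : ∀ k, IsClosed (Z k) := fun k =>
    (isClosed_Ell T).inter
      (isClosed_le ((continuous_apply x).dist (continuous_apply y)) continuous_const)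
  have hc : ∀ k, IsCompact (Z k) := fun k => (hcl k).isCompact
  obtain ⟨q, hq⟩ :=
    IsCompact.nonempty_iInter_of_directed_nonempty_isCompact_isClosed Z hd hn hc hcl
  have hq' : ∀ k : ℕ, q ∈ Z k := Set.mem_iInter.mp hq
  have hd0 : dist (q x) (q y) = 0 := by
    by_contra hne
    have hpos : 0 < dist (q x) (q y) := lt_of_le_of_ne dist_nonneg (Ne.symm hne)
    obtain ⟨k, hk⟩ := exists_nat_one_div_lt hpos
    exact absurd (hq' k).2 (not_le.mpr hk)
  exact ⟨q, (hq' 0).1, dist_eq_zero.mp hd0⟩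

end EllisProof

/-- If `RP²ₛ` is trivial on a transitive system then the system is distal and minimal. -/
theorem stmt6 {X : Type*} [MetricSpace X] [CompactSpace X] [Nonempty X]
    (T : X ≃ₜ X) (htrans : IsTransitive T)
    (h : ∀ x y : X, RP2S T x y → x = y) :
    IsDistal T ∧ IsMinimal T := by
  have heq : ∀ x y : X, (∃ p ∈ Ell T, p x = p y) → x = y := by
    rintro x y ⟨p, hp, hpxy⟩
    exact eq_of_ell T h hp x y hpxy
  have hdist : IsDistal T := by
    intro x y hxy
    rcases lt_or_ge 0 (⨅ n : ℤ, dist (iterZ T n x) (iterZ T n y)) with h' | h'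
    · exact h'
    · exfalso
      apply hxy
      have h0 : (⨅ n : ℤ, dist (iterZ T n x) (iterZ T n y)) = 0 :=
        le_antisymm h' (Real.iInf_nonneg fun n => dist_nonneg)
      have hprox : ∀ ε : ℝ, 0 < ε → ∃ n : ℤ, dist (iterZ T n x) (iterZ T n y) < ε := by
        intro ε hε
        exact exists_lt_of_ciInf_lt (by rw [h0]; exact hε)
      exact heq x y (exists_ell_eq T x y hprox)
  obtain ⟨x₀, hx₀⟩ := htrans
  have himg : ∀ z : X, ∃ f ∈ Ell T, f x₀ = z := by
    intro z
    have hK : IsCompact ((fun f : X → X => f x₀) '' Ell T) :=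
      (isCompact_Ell T).image (continuous_apply x₀)
    have hsub : Set.range (fun n : ℤ => iterZ T n x₀) ⊆ (fun f : X → X => f x₀) '' Ell T := by
      rintro - ⟨n, rfl⟩
      exact ⟨iterZ T n, iterZ_mem_Ell T n, rfl⟩
    have hz : z ∈ closure (Set.range fun n : ℤ => iterZ T n x₀) := hx₀ z
    obtain ⟨f, hf, hfz⟩ := closure_minimal hsub hK.isClosed hz
    exact ⟨f, hf, hfz⟩
  have hinv : ∀ p ∈ Ell T, ∃ q ∈ Ell T, ∀ x : X, q (p x) = x := by
    intro p hp
    have hcont : Continuous (fun q : X → X => q ∘ p) :=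
      continuous_pi fun x => continuous_apply (p x)
    have hne : ((fun q : X → X => q ∘ p) '' Ell T).Nonempty :=
      ⟨iterZ T 0 ∘ p, iterZ T 0, iterZ_mem_Ell T 0, rfl⟩
    have hScl : IsClosed ((fun q : X → X => q ∘ p) '' Ell T) :=
      ((isCompact_Ell T).image hcont).isClosed
    have hSm : ∀ f ∈ (fun q : X → X => q ∘ p) '' Ell T,
        ∀ g ∈ (fun q : X → X => q ∘ p) '' Ell T,
        f ∘ g ∈ (fun q : X → X => q ∘ p) '' Ell T := by
      rintro - ⟨q, hq, rfl⟩ - ⟨q', hq', rfl⟩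
      exact ⟨q ∘ (p ∘ q'), comp_mem_Ell T hq (comp_mem_Ell T hp hq'), rfl⟩
    obtain ⟨w, hw, hww⟩ := exists_idem_of_closed hne hScl hSm
    obtain ⟨q, hq, rfl⟩ := hw
    have hwe : q ∘ p ∈ Ell T := comp_mem_Ell T hq hp
    refine ⟨q, hq, fun x => ?_⟩
    have hfix : (q ∘ p) ((q ∘ p) x) = (q ∘ p) x := congrFun hww x
    exact (heq x ((q ∘ p) x) ⟨q ∘ p, hwe, hfix.symm⟩).symm
  have hmin : IsMinimal T := by
    intro y z
    obtain ⟨p, hpE, hpx⟩ := himg y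
    obtain ⟨q, hqE, hq⟩ := hinv p hpE
    obtain ⟨f, hfE, hfz⟩ := himg z
    have hg : (f ∘ q) y = z := by
      rw [← hpx]
      show f (q (p x₀)) = z
      rw [hq x₀, hfz]
    have hgE : f ∘ q ∈ Ell T := comp_mem_Ell T hfE hqE
    rw [Metric.mem_closure_iff]
    intro ε hε
    obtain ⟨n, hn, -, -, -⟩ := Ell_approx T hgE y y y y hε
    refine ⟨iterZ T n y, ⟨n, rfl⟩, ?_⟩
    rw [hg] at hn
    rw [dist_comm]
    exact hn
  exact ⟨hdist, hmin⟩
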